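/- Let d = 1 and G(t,x) = (2πκt)^{-1/2} exp(-x²/(2κt) - λt) 1_{t>0} with κ, λ > 0. Then there is a constant C such that for all s > 0 and Δ > 0, ∫_ℝ (G(s+Δ, y) - G(s, y))² dy ≤ C Δ² e^{-λs} s^{-5/2}. -/

import Mathlib

open Real MeasureTheory Set

/-!
Expanding the square and using the Chapman–Kolmogorov identity
`∫ G(t,y) G(u,y) dy = G(t+u,0)` turns the integral into `(2πκ)^{-1/2}` times the second
difference `h(2s+2Δ) - 2h(2s+Δ) + h(2s)` of `h(r) = r^{-1/2} e^{-λr}`. Two applications of the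
mean value theorem bound it by `Δ²` times the maximum of
`h''(x) = (3/4 + λx + λ²x²) x^{-5/2} e^{-λx}` on `[2s, 2s+2Δ]`, and for `x ≥ 2s` half of the
exponential absorbs the polynomial while the other half is at most `e^{-λs}`.
-/

theorem hasDerivAt_rpow_mul_exp_neg (p lam : ℝ) {x : ℝ} (hx : 0 < x) :
    HasDerivAt (fun r => r ^ p * exp (-lam * r))
      ((p * x ^ (p - 1) - lam * x ^ p) * exp (-lam * x)) x := by
  refine ((hasDerivAt_rpow_const (p := p) (Or.inl hx.ne')).mul
    ((hasDerivAt_id' x).const_mul (-lam)).exp).congr_deriv ?_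
  ring

theorem hasDerivAt_deriv_rpow_mul_exp_neg (p lam : ℝ) {x : ℝ} (hx : 0 < x) :
    HasDerivAt (fun r => (p * r ^ (p - 1) - lam * r ^ p) * exp (-lam * r))
      ((p * (p - 1) - 2 * p * lam * x + lam ^ 2 * x ^ 2) * x ^ (p - 2) * exp (-lam * x)) x := by
  have hfun : (fun r => (p * r ^ (p - 1) - lam * r ^ p) * exp (-lam * r)) =
      fun r => p * (r ^ (p - 1) * exp (-lam * r)) - lam * (r ^ p * exp (-lam * r)) := by
    funext r; ring
  rw [hfun]
  refine (((hasDerivAt_rpow_mul_exp_neg (p - 1) lam hx).const_mul p).sub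
    ((hasDerivAt_rpow_mul_exp_neg p lam hx).const_mul lam)).congr_deriv ?_
  have h1 : x ^ (p - 1) = x ^ (p - 2) * x := by
    rw [← rpow_add_one hx.ne']; ring_nf
  have h2 : x ^ p = x ^ (p - 2) * x ^ 2 := by
    rw [← rpow_natCast, ← rpow_add hx]; norm_num
  rw [show p - 1 - 1 = p - 2 by ring, h1, h2]; ring

theorem second_difference_le {f f' f'' : ℝ → ℝ} {a Δ M : ℝ} (hΔ : 0 < Δ)
    (hf : ∀ x ∈ Icc a (a + 2 * Δ), HasDerivAt f (f' x) x)
    (hf' : ∀ x ∈ Icc a (a + 2 * Δ), HasDerivAt f' (f'' x) x)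
    (hM : ∀ x ∈ Icc a (a + 2 * Δ), f'' x ≤ M) :
    f (a + 2 * Δ) - 2 * f (a + Δ) + f a ≤ M * Δ ^ 2 := by
  have hg : ∀ x ∈ Icc a (a + Δ),
      HasDerivAt (fun x => f (x + Δ) - f x) (f' (x + Δ) - f' x) x := fun x hx =>
    ((hf (x + Δ) ⟨by linarith [hx.1], by linarith [hx.2]⟩).comp_add_const x Δ).sub
      (hf x ⟨hx.1, by linarith [hx.2]⟩)
  obtain ⟨c, hc, hc_eq⟩ := exists_hasDerivAt_eq_slope (fun x => f (x + Δ) - f x)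
    (fun x => f' (x + Δ) - f' x) (by linarith : a < a + Δ)
    (fun x hx => (hg x hx).continuousAt.continuousWithinAt)
    (fun x hx => hg x (Ioo_subset_Icc_self hx))
  obtain ⟨d, hd, hd_eq⟩ := exists_hasDerivAt_eq_slope f' f'' (by linarith : c < c + Δ)
    (fun x hx => (hf' x ⟨by linarith [hc.1, hx.1], by linarith [hc.2, hx.2]⟩).continuousAt
      |>.continuousWithinAt)
    (fun x hx => hf' x ⟨by linarith [hc.1, hx.1], by linarith [hc.2, hx.2]⟩)
  have hdM := hM d ⟨by linarith [hc.1, hd.1], by linarith [hc.2, hd.2]⟩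
  rw [add_sub_cancel_left] at hc_eq hd_eq
  have hsecond : f (a + 2 * Δ) - 2 * f (a + Δ) + f a = f'' d * Δ ^ 2 := by
    rw [hd_eq, hc_eq, show a + Δ + Δ = a + 2 * Δ by ring]
    field_simp
    ring
  rw [hsecond]
  exact mul_le_mul_of_nonneg_right hdM (sq_nonneg Δ)

theorem second_deriv_rpow_neg_half_mul_exp_le {lam s x : ℝ} (hlam : 0 ≤ lam) (hs : 0 < s)
    (hx : 2 * s ≤ x) :
    (3 / 4 + lam * x + lam ^ 2 * x ^ 2) * x ^ (-(5 : ℝ) / 2) * exp (-lam * x) ≤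
      8 * exp (-lam * s) * s ^ (-(5 : ℝ) / 2) := by
  have hx0 : 0 ≤ x := by linarith
  have hpoly : 3 / 4 + lam * x + lam ^ 2 * x ^ 2 ≤ 8 * exp (lam * x / 2) := by
    nlinarith [quadratic_le_exp_of_nonneg (by positivity : 0 ≤ lam * x / 2)]
  have hexp : exp (-lam * x) ≤ exp (-lam * s) * exp (-(lam * x / 2)) := by
    rw [← exp_add]; exact exp_le_exp.mpr (by nlinarith)
  have hrpow : x ^ (-(5 : ℝ) / 2) ≤ s ^ (-(5 : ℝ) / 2) :=
    rpow_le_rpow_of_nonpos hs (by linarith) (by norm_num)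
  calc (3 / 4 + lam * x + lam ^ 2 * x ^ 2) * x ^ (-(5 : ℝ) / 2) * exp (-lam * x)
      ≤ 8 * exp (lam * x / 2) * s ^ (-(5 : ℝ) / 2) *
          (exp (-lam * s) * exp (-(lam * x / 2))) := by
        gcongr
    _ = 8 * exp (-lam * s) * s ^ (-(5 : ℝ) / 2) *
          (exp (lam * x / 2) * exp (-(lam * x / 2))) := by
        ring
    _ = 8 * exp (-lam * s) * s ^ (-(5 : ℝ) / 2) := by
        rw [← exp_add, add_neg_cancel, exp_zero, mul_one]

noncomputable def dampedHeatKernel (κ lam t y : ℝ) : ℝ :=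
  (2 * π * κ * t) ^ (-(1 : ℝ) / 2) * exp (-y ^ 2 / (2 * κ * t) - lam * t)

section Kernel

variable {κ : ℝ} (lam : ℝ) {t u : ℝ}

theorem dampedHeatKernel_mul_dampedHeatKernel (hκ : 0 < κ) (ht : 0 < t) (hu : 0 < u) (y : ℝ) :
    dampedHeatKernel κ lam t y * dampedHeatKernel κ lam u y =
      (2 * π * κ * t) ^ (-(1 : ℝ) / 2) * (2 * π * κ * u) ^ (-(1 : ℝ) / 2) *
        exp (-lam * (t + u)) * exp (-((t + u) / (2 * κ * t * u)) * y ^ 2) := by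
  have hexp : (-y ^ 2 / (2 * κ * t) - lam * t) + (-y ^ 2 / (2 * κ * u) - lam * u) =
      -lam * (t + u) + -((t + u) / (2 * κ * t * u)) * y ^ 2 := by
    field_simp; ring
  rw [dampedHeatKernel, dampedHeatKernel, mul_mul_mul_comm, ← exp_add, hexp, exp_add]
  ring

theorem integrable_dampedHeatKernel_mul (hκ : 0 < κ) (ht : 0 < t) (hu : 0 < u) :
    Integrable fun y => dampedHeatKernel κ lam t y * dampedHeatKernel κ lam u y := by
  simp_rw [dampedHeatKernel_mul_dampedHeatKernel lam hκ ht hu]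
  exact (integrable_exp_neg_mul_sq (by positivity)).const_mul _

theorem integral_dampedHeatKernel_mul (hκ : 0 < κ) (ht : 0 < t) (hu : 0 < u) :
    ∫ y, dampedHeatKernel κ lam t y * dampedHeatKernel κ lam u y =
      dampedHeatKernel κ lam (t + u) 0 := by
  simp_rw [dampedHeatKernel_mul_dampedHeatKernel lam hκ ht hu]
  rw [integral_const_mul, integral_gaussian]
  have hsqrt : √(π / ((t + u) / (2 * κ * t * u))) =
      ((t + u) / (2 * κ * t * u) / π) ^ (-(1 : ℝ) / 2) := by
    rw [sqrt_eq_rpow, ← inv_div, inv_rpow (by positivity), ← rpow_neg (by positivity)]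
    norm_num
  have hconst : 2 * π * κ * t * (2 * π * κ * u) * ((t + u) / (2 * κ * t * u) / π) =
      2 * π * κ * (t + u) := by
    field_simp
  rw [hsqrt, dampedHeatKernel, ← hconst,
    mul_rpow (x := 2 * π * κ * t * (2 * π * κ * u)) (by positivity) (by positivity),
    mul_rpow (x := 2 * π * κ * t) (by positivity) (by positivity),
    zero_pow two_ne_zero, neg_zero, zero_div, zero_sub, neg_mul]
  ring

theorem integral_sq_sub_dampedHeatKernel (hκ : 0 < κ) (ht : 0 < t) (hu : 0 < u) :
    ∫ y, (dampedHeatKernel κ lam t y - dampedHeatKernel κ lam u y) ^ 2 =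
      dampedHeatKernel κ lam (t + t) 0 - 2 * dampedHeatKernel κ lam (t + u) 0 +
        dampedHeatKernel κ lam (u + u) 0 := by
  have htt := integrable_dampedHeatKernel_mul lam hκ ht ht
  have htu := (integrable_dampedHeatKernel_mul lam hκ ht hu).const_mul 2
  have huu := integrable_dampedHeatKernel_mul lam hκ hu hu
  have hexpand : (fun y => (dampedHeatKernel κ lam t y - dampedHeatKernel κ lam u y) ^ 2) =
      fun y => dampedHeatKernel κ lam t y * dampedHeatKernel κ lam t y -
        2 * (dampedHeatKernel κ lam t y * dampedHeatKernel κ lam u y) +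
        dampedHeatKernel κ lam u y * dampedHeatKernel κ lam u y := by
    funext y; ring
  rw [hexpand, integral_add ?_ huu, integral_sub htt htu, integral_const_mul,
    integral_dampedHeatKernel_mul lam hκ ht ht, integral_dampedHeatKernel_mul lam hκ ht hu,
    integral_dampedHeatKernel_mul lam hκ hu hu]
  exact htt.sub htu

theorem dampedHeatKernel_zero (hκ : 0 < κ) (ht : 0 < t) :
    dampedHeatKernel κ lam t 0 =
      (2 * π * κ) ^ (-(1 : ℝ) / 2) * (t ^ (-(1 : ℝ) / 2) * exp (-lam * t)) := by
  rw [dampedHeatKernel, mul_rpow (by positivity) ht.le, zero_pow two_ne_zero, neg_zero, zero_div,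
    zero_sub, neg_mul, mul_assoc]

end Kernel

theorem stmt_9 (κ lam : ℝ) (hκ : 0 < κ) (hlam : 0 < lam)
    (G : ℝ → ℝ → ℝ)
    (hG : ∀ t x, G t x = if 0 < t then
      (2 * π * κ * t) ^ (-(1 : ℝ) / 2) * Real.exp (-x ^ 2 / (2 * κ * t) - lam * t) else 0) :
    ∃ C : ℝ, ∀ (s Δ : ℝ), 0 < s → 0 < Δ →
      ∫ y : ℝ, (G (s + Δ) y - G s y) ^ 2
        ≤ C * Δ ^ 2 * Real.exp (-lam * s) * s ^ (-(5 : ℝ) / 2) := by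
  refine ⟨8 * (2 * π * κ) ^ (-(1 : ℝ) / 2), fun s Δ hs hΔ => ?_⟩
  have hG_eq : ∀ t, 0 < t → G t = dampedHeatKernel κ lam t := fun t ht =>
    funext fun y => by rw [hG, if_pos ht, dampedHeatKernel]
  have hsecond := second_difference_le (f := fun r => r ^ (-(1 : ℝ) / 2) * exp (-lam * r))
    (a := 2 * s) hΔ
    (fun x hx => hasDerivAt_rpow_mul_exp_neg _ lam (by linarith [hx.1]))
    (fun x hx => hasDerivAt_deriv_rpow_mul_exp_neg _ lam (by linarith [hx.1]))
    (fun x hx => by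
      convert second_deriv_rpow_neg_half_mul_exp_le hlam.le hs hx.1 using 3 <;> norm_num)
  rw [hG_eq _ (by positivity), hG_eq _ hs,
    integral_sq_sub_dampedHeatKernel lam hκ (by positivity) hs,
    show s + Δ + (s + Δ) = 2 * s + 2 * Δ by ring, show s + Δ + s = 2 * s + Δ by ring,
    show s + s = 2 * s by ring, dampedHeatKernel_zero lam hκ (by positivity),
    dampedHeatKernel_zero lam hκ (by positivity), dampedHeatKernel_zero lam hκ (by positivity)]
  linear_combination (2 * π * κ) ^ (-(1 : ℝ) / 2) * hsecond
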